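/- arXiv:1702.08661 — 6 statements merged into one kernel-verified Lean document; each statement's English description precedes it below -/
import Mathlib

section
/- Let x₀ ∈ L^∞([0,1]) and v ∈ L^∞_loc([0,∞)). Define x(t,z) = v(t-z) if t ≥ z and x(t,z) = x₀(z-t) if t < z, for (t,z) ∈ [0,∞)×[0,1]. Then for every σ > 0 and t ≥ 0, ess sup_{z∈[0,1]} |x(t,z)| ≤ exp(-σ(t-1))·‖x₀‖_∞ + exp(σ)·sup_{max(0,t-1) ≤ s ≤ t} (|v(s)| exp(-σ(t-s))). -/
open MeasureTheory Real Set

/-!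
On the part of `[0,1]` reached by characteristics from the boundary (`z ≤ t`), `x(t,z) = v(t-z)`
with `t - z ∈ [max 0 (t-1), t]`, and the weight `exp(-σ z) ≥ exp(-σ)` is absorbed by the factor
`exp σ`. On the rest (`t < z ≤ 1`), `x(t,z) = x₀(z-t)` is bounded by `‖x₀‖_∞` almost everywhere,
because translation preserves null sets, and there `exp(-σ(t-1)) ≥ 1`.
-/

/-- Any upper bound of `f` on `I` will do: the inner suprema over `s ∉ I` take the junk value `0`. -/
theorem Real.le_biSup_of_forall_le {f : ℝ → ℝ} {I : Set ℝ} {C : ℝ}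
    (hC : ∀ s ∈ I, f s ≤ C) {s : ℝ} (hs : s ∈ I) : f s ≤ ⨆ s ∈ I, f s := by
  have hbdd : BddAbove (range fun s => ⨆ _ : s ∈ I, f s) := by
    refine ⟨max C 0, ?_⟩
    rintro _ ⟨s, rfl⟩
    by_cases hsI : s ∈ I
    · simpa only [ciSup_pos hsI] using (hC s hsI).trans (le_max_left C 0)
    · simp [hsI]
  exact le_ciSup_of_le hbdd s (ciSup_pos (f := fun _ => f s) hs).ge

theorem le_exp_mul_of_mul_exp_neg_le {a S σ z : ℝ} (ha : 0 ≤ a) (hσ : 0 ≤ σ) (hz : z ≤ 1)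
    (h : a * exp (-σ * z) ≤ S) : a ≤ exp σ * S := by
  have hS : 0 ≤ S := (mul_nonneg ha (exp_pos _).le).trans h
  calc a = a * exp (-σ * z) * exp (σ * z) := by rw [mul_assoc, ← exp_add]; simp
    _ ≤ S * exp σ := by gcongr; nlinarith
    _ = exp σ * S := mul_comm _ _

theorem ae_enorm_comp_sub_le_eLpNorm_top {G F : Type*} [MeasurableSpace G] [AddGroup G]
    [MeasurableAdd G] [NormedAddCommGroup F] (μ : Measure G) [μ.IsAddRightInvariant]
    {s : Set G} (hs : MeasurableSet s) (f : G → F) (t : G) :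
    ∀ᵐ z ∂μ, z - t ∈ s → ‖f (z - t)‖ₑ ≤ eLpNorm f ⊤ (μ.restrict s) := by
  have hf : ∀ᵐ w ∂μ, w ∈ s → ‖f w‖ₑ ≤ eLpNorm f ⊤ (μ.restrict s) := by
    rw [← ae_restrict_iff' hs, eLpNorm_exponent_top]
    exact ae_le_eLpNormEssSup
  exact (measurePreserving_sub_right μ t).quasiMeasurePreserving.ae hf

theorem stmt_2_general (x₀ v : ℝ → ℝ)
    (hvloc : ∀ r : ℝ, ∃ C, ∀ s ∈ Set.Icc 0 r, |v s| ≤ C)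
    (x : ℝ → ℝ → ℝ)
    (hx : ∀ t ≥ (0:ℝ), ∀ z ∈ Set.Icc (0:ℝ) 1,
      x t z = if z ≤ t then v (t - z) else x₀ (z - t))
    (σ : ℝ) (hσ : 0 < σ) (t : ℝ) (ht : 0 ≤ t) :
    (MeasureTheory.eLpNorm (fun z => x t z) ⊤ (volume.restrict (Set.Icc (0:ℝ) 1)))
      ≤ ENNReal.ofReal (Real.exp (-σ * (t - 1)))
          * MeasureTheory.eLpNorm x₀ ⊤ (volume.restrict (Set.Icc (0:ℝ) 1))
        + ENNReal.ofReal
            (Real.exp σ * ⨆ s ∈ Set.Icc (max 0 (t - 1)) t, |v s| * Real.exp (-σ * (t - s))) := by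
  obtain ⟨C, hC⟩ := hvloc t
  have hweight_le : ∀ s ∈ Icc (max 0 (t - 1)) t, |v s| * exp (-σ * (t - s)) ≤ C := fun s hs =>
    calc |v s| * exp (-σ * (t - s)) ≤ |v s| * 1 := by
          gcongr; exact exp_le_one_iff.mpr (by nlinarith [hs.2])
      _ ≤ C := by simpa using hC s ⟨(le_max_left _ _).trans hs.1, hs.2⟩
  rw [eLpNorm_exponent_top]
  refine essSup_le_of_ae_le _ ?_
  filter_upwards [ae_restrict_mem measurableSet_Icc,
    ae_restrict_of_ae (ae_enorm_comp_sub_le_eLpNorm_top volume measurableSet_Icc x₀ t)]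
    with z hz hx₀z
  rw [hx t ht z hz]
  split_ifs with hzt
  · have hs : t - z ∈ Icc (max 0 (t - 1)) t :=
      ⟨max_le (by linarith) (by linarith [hz.2]), by linarith [hz.1]⟩
    have hv : |v (t - z)| ≤ exp σ * ⨆ s ∈ Icc (max 0 (t - 1)) t, |v s| * exp (-σ * (t - s)) :=
      le_exp_mul_of_mul_exp_neg_le (abs_nonneg _) hσ.le hz.2
        (by simpa using Real.le_biSup_of_forall_le hweight_le hs)
    rw [Real.enorm_eq_ofReal_abs]
    exact (ENNReal.ofReal_le_ofReal hv).trans le_add_self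
  · have hcoeff : (1 : ENNReal) ≤ ENNReal.ofReal (exp (-σ * (t - 1))) :=
      ENNReal.one_le_ofReal.mpr (one_le_exp (by nlinarith [hz.2]))
    calc ‖x₀ (z - t)‖ₑ ≤ eLpNorm x₀ ⊤ (volume.restrict (Icc 0 1)) :=
          hx₀z ⟨by linarith, by linarith [hz.2]⟩
      _ ≤ ENNReal.ofReal (exp (-σ * (t - 1))) * eLpNorm x₀ ⊤ (volume.restrict (Icc 0 1)) :=
          le_mul_of_one_le_left' hcoeff
      _ ≤ _ := le_self_add

/-- Sup-norm estimate (2.18) for the mild solution of the transport equation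
`x_t + x_z = 0`, `x(t,0) = v(t)`, `x(0,·) = x₀`, given by characteristics:
`x(t,z) = v(t-z)` for `t ≥ z` and `x(t,z) = x₀(z-t)` for `t < z`. -/
theorem stmt_2 (x₀ v : ℝ → ℝ)
    (hx₀ : Measurable x₀) (hx₀b : ∃ C, ∀ z ∈ Set.Icc (0:ℝ) 1, |x₀ z| ≤ C)
    (hv : Measurable v) (hvloc : ∀ r : ℝ, ∃ C, ∀ s ∈ Set.Icc 0 r, |v s| ≤ C)
    (x : ℝ → ℝ → ℝ)
    (hx : ∀ t ≥ (0:ℝ), ∀ z ∈ Set.Icc (0:ℝ) 1,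
      x t z = if z ≤ t then v (t - z) else x₀ (z - t))
    (σ : ℝ) (hσ : 0 < σ) (t : ℝ) (ht : 0 ≤ t) :
    (MeasureTheory.eLpNorm (fun z => x t z) ⊤ (volume.restrict (Set.Icc (0:ℝ) 1)))
      ≤ ENNReal.ofReal (Real.exp (-σ * (t - 1)))
          * MeasureTheory.eLpNorm x₀ ⊤ (volume.restrict (Set.Icc (0:ℝ) 1))
        + ENNReal.ofReal
            (Real.exp σ * ⨆ s ∈ Set.Icc (max 0 (t - 1)) t, |v s| * Real.exp (-σ * (t - s))) :=
  stmt_2_general x₀ v hvloc x hx σ hσ t ht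
end

section
/- Let a ∈ ℝ, M ≥ 0, τᵢ ≥ 0, and let v : [τᵢ-1, ∞) → ℝ be a function with v(τᵢ) = 0, absolutely continuous on (τᵢ, τᵢ₊₁), satisfying v(t) = exp(-a(t-τᵢ))·v(τᵢ) + ∫_{τᵢ}^t exp(-a(t-s))·w(s) ds for t ∈ [τᵢ, τᵢ₊₁), where |w(s)| ≤ M·sup_{τᵢ-1 ≤ r ≤ s} |v(r)| for all s. Then |v(t)| ≤ M·p_a(t-τᵢ)·sup_{τᵢ-1 ≤ s ≤ t} |v(s)| for all t ∈ [τᵢ, τᵢ₊₁), where p_a(h) = ∫_0^h exp(-a(h-r)) dr. -/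
open MeasureTheory Real Set

/-! The first term of the variation-of-constants formula vanishes because `v τᵢ = 0`, so `|v t|` is
bounded by `∫_{τᵢ}^t e^{-a(t-s)} |w s| ds`, and it suffices to bound `|w s|` by `M S(t)` for
`s ∈ (τᵢ, t]`, where `S(t) = sup_{[τᵢ-1, t]} |v|`. This is the monotonicity of `S`, which needs care
because a real `⨆` over an unbounded family is `0`: if `|v|` is unbounded on `[τᵢ-1, t]`, then,
being continuous on `[s, t] ⊆ (τᵢ, τᵢ₊₁)`, it is already unbounded on `[τᵢ-1, s]`, so `S(s) = 0`
and `w s = 0`. -/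

namespace Real

variable {α : Type*} {f : α → ℝ} {s t : Set α}

lemma biSup_le_biSup_of_subset (hf : ∀ x, 0 ≤ f x) (hst : s ⊆ t) (ht : BddAbove (f '' t)) :
    ⨆ x ∈ s, f x ≤ ⨆ x ∈ t, f x := by
  have hbdd : BddAbove (⋃ x, range fun _ : x ∈ t => f x) :=
    ht.mono <| iUnion_subset fun x => range_subset_iff.2 fun hx => mem_image_of_mem f hx
  have hnonneg : 0 ≤ ⨆ x ∈ t, f x := iSup_nonneg fun x => iSup_nonneg fun _ => hf x
  exact Real.iSup_le (fun x => Real.iSup_le (fun hx => le_ciSup₂ hbdd x (hst hx)) hnonneg) hnonneg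

lemma biSup_of_not_bddAbove (hs : ¬BddAbove (f '' s)) : ⨆ x ∈ s, f x = 0 := by
  rw [image_eq_range] at hs
  exact (cbiSup_of_not_bddAbove hs).trans sSup_empty

lemma biSup_Icc_le_biSup_Icc_of_continuousOn {f : ℝ → ℝ} {a b c : ℝ} (hf : ∀ x, 0 ≤ f x)
    (hbc : b ≤ c) (hcont : ContinuousOn f (Icc b c)) :
    ⨆ x ∈ Icc a b, f x ≤ ⨆ x ∈ Icc a c, f x := by
  by_cases hac : BddAbove (f '' Icc a c)
  · exact biSup_le_biSup_of_subset hf (Icc_subset_Icc_right hbc) hac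
  · have hab : ¬BddAbove (f '' Icc a b) := fun hab =>
      hac <| (hab.union (isCompact_Icc.bddAbove_image hcont)).mono <| by
        rw [← image_union]
        exact image_mono Icc_subset_Icc_union_Icc
    rw [biSup_of_not_bddAbove hab]
    exact iSup_nonneg fun x => iSup_nonneg fun _ => hf x

end Real

lemma abs_integral_exp_mul_le {a t₀ t C : ℝ} {w : ℝ → ℝ} (ht : t₀ ≤ t)
    (hw : ∀ s ∈ Ioc t₀ t, |w s| ≤ C) :
    |∫ s in t₀..t, exp (-(a * (t - s))) * w s| ≤
      C * ∫ r in (0:ℝ)..(t - t₀), exp (-(a * ((t - t₀) - r))) := by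
  have hkernel : Continuous fun s => exp (-(a * (t - s))) := by fun_prop
  calc |∫ s in t₀..t, exp (-(a * (t - s))) * w s|
      ≤ ∫ s in t₀..t, exp (-(a * (t - s))) * C := by
        rw [← norm_eq_abs]
        refine intervalIntegral.norm_integral_le_of_norm_le ht (ae_of_all _ fun s hs => ?_)
          ((hkernel.mul continuous_const).intervalIntegrable _ _)
        rw [norm_mul, norm_of_nonneg (exp_pos _).le]
        exact mul_le_mul_of_nonneg_left (hw s hs) (exp_pos _).le
    _ = C * ∫ s in t₀..t, exp (-(a * (t - s))) := by
        rw [intervalIntegral.integral_mul_const, mul_comm]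
    _ = C * ∫ r in (0:ℝ)..(t - t₀), exp (-(a * ((t - t₀) - r))) := by
        have := intervalIntegral.integral_comp_add_right (fun s => exp (-(a * (t - s)))) t₀
          (a := 0) (b := t - t₀)
        simp only [zero_add, sub_add_cancel] at this
        rw [← this]
        simp only [sub_add_eq_sub_sub_swap]

theorem stmt_5_general (a M τi τi1 : ℝ) (hM : 0 ≤ M)
    (v w : ℝ → ℝ) (hv0 : v τi = 0)
    (hvc : ContinuousOn v (Set.Ioo τi τi1))
    (hvoc : ∀ t ∈ Set.Ico τi τi1,
      v t = Real.exp (-(a * (t - τi))) * v τi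
            + ∫ s in τi..t, Real.exp (-(a * (t - s))) * w s)
    (hw : ∀ s, |w s| ≤ M * ⨆ r ∈ Set.Icc (τi - 1) s, |v r|) :
    ∀ t ∈ Set.Ico τi τi1,
      |v t| ≤ M * (∫ r in (0:ℝ)..(t - τi), Real.exp (-(a * ((t - τi) - r))))
                * ⨆ s ∈ Set.Icc (τi - 1) t, |v s| := by
  intro t ht
  have hw_le : ∀ s ∈ Ioc τi t, |w s| ≤ M * ⨆ r ∈ Icc (τi - 1) t, |v r| := fun s hs =>
    (hw s).trans <| mul_le_mul_of_nonneg_left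
      (Real.biSup_Icc_le_biSup_Icc_of_continuousOn (fun _ => abs_nonneg _) hs.2
        (hvc.abs.mono fun x hx => ⟨hs.1.trans_le hx.1, hx.2.trans_lt ht.2⟩)) hM
  rw [hvoc t ht, hv0, mul_zero, zero_add, mul_right_comm]
  exact abs_integral_exp_mul_le ht.1 hw_le

/-- Variation-of-constants estimate (3.16):
if `v(τᵢ)=0` and `v(t) = e^{-a(t-τᵢ)} v(τᵢ) + ∫_{τᵢ}^t e^{-a(t-s)} w(s) ds` with
`|w(s)| ≤ M sup_{τᵢ-1 ≤ r ≤ s} |v(r)|`, then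
`|v(t)| ≤ M p_a(t-τᵢ) sup_{τᵢ-1 ≤ s ≤ t} |v(s)|` on `[τᵢ, τᵢ₊₁)`. -/
theorem stmt_5 (a M τi τi1 : ℝ) (hM : 0 ≤ M) (hτi : 0 ≤ τi) (hlt : τi < τi1)
    (v w : ℝ → ℝ) (hv0 : v τi = 0)
    (hvc : ContinuousOn v (Set.Ioo τi τi1))
    (hvoc : ∀ t ∈ Set.Ico τi τi1,
      v t = Real.exp (-(a * (t - τi))) * v τi
            + ∫ s in τi..t, Real.exp (-(a * (t - s))) * w s)
    (hw : ∀ s, |w s| ≤ M * ⨆ r ∈ Set.Icc (τi - 1) s, |v r|) :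
    ∀ t ∈ Set.Ico τi τi1,
      |v t| ≤ M * (∫ r in (0:ℝ)..(t - τi), Real.exp (-(a * ((t - τi) - r))))
                * ⨆ s ∈ Set.Icc (τi - 1) t, |v s| :=
  stmt_5_general a M τi τi1 hM v w hv0 hvc hvoc hw
end

section
/- Let σ, T, M > 0 and a ∈ ℝ satisfy M·p_a(T)·exp(σ(1+T)) < 1, and let v : [-1,∞) → ℝ be bounded on compacts. Suppose that for every t ≥ 0 it holds that |v(t)|·exp(σt) ≤ M·p_a(T)·exp(σ(1+T))·sup_{-1 ≤ s ≤ t} (|v(s)| exp(σs)). Then sup_{0 ≤ s ≤ t} (|v(s)| exp(σs)) ≤ sup_{-1 ≤ s < 0} (|v(s)| exp(σs)) for all t ≥ 0, and consequently |v(t)| exp(σt) ≤ sup_{-1 ≤ s < 0} |v(s)| for all t ≥ 0. -/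
open MeasureTheory Real Set


private lemma bsup_le' {S : Set ℝ} {f : ℝ → ℝ} {c : ℝ} (hc : 0 ≤ c)
    (h : ∀ s ∈ S, f s ≤ c) : (⨆ s ∈ S, f s) ≤ c :=
  Real.iSup_le (fun s => Real.iSup_le (fun hs => h s hs) hc) hc

private lemma le_bsup' {S : Set ℝ} {f : ℝ → ℝ} {s₀ : ℝ} (hs₀ : s₀ ∈ S) {B : ℝ}
    (hB : ∀ s ∈ S, f s ≤ B) : f s₀ ≤ ⨆ s ∈ S, f s := by
  have hbdd : BddAbove (Set.range fun s => ⨆ _ : s ∈ S, f s) := by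
    refine ⟨max B 0, ?_⟩
    rintro _ ⟨s, rfl⟩
    by_cases hs : s ∈ S
    · simp only
      rw [ciSup_pos (f := fun _ => f s) hs]
      exact le_max_of_le_left (hB s hs)
    · simp only
      rw [show (⨆ _ : s ∈ S, f s) = 0 by
        haveI : IsEmpty (s ∈ S : Prop) := ⟨hs⟩
        exact Real.iSup_of_isEmpty _]
      exact le_max_right _ _
  calc f s₀ = ⨆ _ : s₀ ∈ S, f s₀ := (ciSup_pos (f := fun _ => f s₀) hs₀).symm
    _ ≤ _ := le_ciSup hbdd s₀

/-- Small-gain argument (3.18)⇒(3.14): if `M p_a(T) e^{σ(1+T)} < 1` and the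
pointwise weighted bound holds for all `t ≥ 0`, then the weighted sup over
`[0,t]` is bounded by the weighted sup over the history `[-1,0)`, and
consequently `|v(t)| e^{σt} ≤ sup_{-1 ≤ s < 0} |v(s)|` for all `t ≥ 0`. -/
theorem stmt_6 (σ T M a : ℝ) (hσ : 0 < σ) (hT : 0 < T) (hM : 0 < M)
    (hsg : M * (∫ r in (0:ℝ)..T, Real.exp (-(a * (T - r)))) * Real.exp (σ * (1 + T)) < 1)
    (v : ℝ → ℝ)
    (hvb : ∀ K : ℝ, ∃ C, ∀ s ∈ Set.Icc (-1 : ℝ) K, |v s| ≤ C)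
    (hpt : ∀ t ≥ (0:ℝ),
      |v t| * Real.exp (σ * t)
        ≤ M * (∫ r in (0:ℝ)..T, Real.exp (-(a * (T - r)))) * Real.exp (σ * (1 + T))
            * ⨆ s ∈ Set.Icc (-1 : ℝ) t, |v s| * Real.exp (σ * s)) :
    (∀ t ≥ (0:ℝ),
      (⨆ s ∈ Set.Icc (0:ℝ) t, |v s| * Real.exp (σ * s))
        ≤ ⨆ s ∈ Set.Ico (-1 : ℝ) 0, |v s| * Real.exp (σ * s)) ∧
    (∀ t ≥ (0:ℝ), |v t| * Real.exp (σ * t) ≤ ⨆ s ∈ Set.Ico (-1 : ℝ) 0, |v s|) := by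
  set γ := M * (∫ r in (0:ℝ)..T, Real.exp (-(a * (T - r)))) * Real.exp (σ * (1 + T)) with hγ
  have hγ0 : 0 ≤ γ := by
    have hint : 0 ≤ ∫ r in (0:ℝ)..T, Real.exp (-(a * (T - r))) :=
      intervalIntegral.integral_nonneg hT.le (fun x _ => (Real.exp_pos _).le)
    positivity
  set E : ℝ → ℝ := fun s => |v s| * Real.exp (σ * s) with hE
  have hEnn : ∀ s, 0 ≤ E s := fun s => by positivity
  -- bound on compacts
  have hbd : ∀ t, ∃ B, ∀ s ∈ Set.Icc (-1:ℝ) t, E s ≤ B := by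
    intro t
    obtain ⟨C, hC⟩ := hvb t
    refine ⟨max C 0 * Real.exp (σ * max t 0), fun s hs => ?_⟩
    have h1 : |v s| ≤ max C 0 := le_max_of_le_left (hC s hs)
    have h2 : Real.exp (σ * s) ≤ Real.exp (σ * max t 0) :=
      Real.exp_le_exp.2 (by nlinarith [hs.2, le_max_left t 0])
    exact mul_le_mul h1 h2 (Real.exp_pos _).le (le_max_right _ _)
  -- main claim
  have key : ∀ t ≥ (0:ℝ), (⨆ s ∈ Set.Icc (0:ℝ) t, E s) ≤ ⨆ s ∈ Set.Ico (-1:ℝ) 0, E s := by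
    intro t ht
    obtain ⟨B, hB⟩ := hbd t
    set H := ⨆ s ∈ Set.Ico (-1:ℝ) 0, E s with hH
    set A := ⨆ s ∈ Set.Icc (0:ℝ) t, E s with hA
    set S := ⨆ s ∈ Set.Icc (-1:ℝ) t, E s with hS
    have hBIco : ∀ s ∈ Set.Ico (-1:ℝ) 0, E s ≤ B := fun s hs =>
      hB s ⟨hs.1, hs.2.le.trans ht⟩
    have hBIcc0 : ∀ s ∈ Set.Icc (0:ℝ) t, E s ≤ B := fun s hs =>
      hB s ⟨le_trans (by norm_num) hs.1, hs.2⟩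
    have hH0 : 0 ≤ H := le_trans (hEnn (-1)) (le_bsup' ⟨le_refl _, by norm_num⟩ hBIco)
    have hA0 : 0 ≤ A := le_trans (hEnn 0) (le_bsup' ⟨le_refl _, ht⟩ hBIcc0)
    have hS0 : 0 ≤ S := le_trans (hEnn 0) (le_bsup' ⟨by norm_num, ht⟩ hB)
    -- S ≤ max H A
    have hSmax : S ≤ max H A := by
      refine bsup_le' (le_max_of_le_left hH0) (fun s hs => ?_)
      rcases lt_or_ge s 0 with h | h
      · exact le_max_of_le_left (le_bsup' ⟨hs.1, h⟩ hBIco)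
      · exact le_max_of_le_right (le_bsup' ⟨h, hs.2⟩ hBIcc0)
    -- A ≤ γ * S
    have hAγS : A ≤ γ * S := by
      refine bsup_le' (by positivity) (fun s hs => ?_)
      have h1 := hpt s hs.1
      have h2 : (⨆ r ∈ Set.Icc (-1:ℝ) s, E r) ≤ S := by
        refine bsup_le' hS0 (fun r hr => le_bsup' ⟨hr.1, hr.2.trans hs.2⟩ hB)
      calc E s ≤ γ * ⨆ r ∈ Set.Icc (-1:ℝ) s, E r := h1
        _ ≤ γ * S := by exact mul_le_mul_of_nonneg_left h2 hγ0
    rcases le_or_gt A H with h | h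
    · exact h
    · exfalso
      have hmax : max H A = A := max_eq_right h.le
      have : A ≤ γ * A := hAγS.trans (by rw [← hmax]; exact mul_le_mul_of_nonneg_left hSmax hγ0)
      have hApos : 0 < A := lt_of_le_of_lt hH0 h
      nlinarith
  refine ⟨key, fun t ht => ?_⟩
  obtain ⟨B, hB⟩ := hbd t
  have h1 : E t ≤ ⨆ s ∈ Set.Icc (0:ℝ) t, E s :=
    le_bsup' ⟨ht, le_refl _⟩ (fun s hs => hB s ⟨le_trans (by norm_num) hs.1, hs.2⟩)
  have h2 := key t ht
  -- sup over Ico of E ≤ sup over Ico of |v|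
  obtain ⟨C, hC⟩ := hvb 0
  have hC' : ∀ s ∈ Set.Ico (-1:ℝ) 0, |v s| ≤ max C 0 := fun s hs =>
    le_max_of_le_left (hC s ⟨hs.1, hs.2.le⟩)
  have hc0 : 0 ≤ ⨆ s ∈ Set.Ico (-1:ℝ) 0, |v s| := by
    have hmem : (-1:ℝ) ∈ Set.Ico (-1:ℝ) 0 := ⟨le_refl _, by norm_num⟩
    have h := le_bsup' (f := fun s => |v s|) hmem hC'
    exact le_trans (abs_nonneg _) h
  have h3 : (⨆ s ∈ Set.Ico (-1:ℝ) 0, E s) ≤ ⨆ s ∈ Set.Ico (-1:ℝ) 0, |v s| := by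
    refine bsup_le' hc0 (fun s hs => ?_)
    have : E s ≤ |v s| := by
      have : Real.exp (σ * s) ≤ 1 := Real.exp_le_one_iff.2 (by nlinarith [hs.2])
      calc E s ≤ |v s| * 1 := mul_le_mul_of_nonneg_left this (abs_nonneg _)
        _ = |v s| := mul_one _
    exact this.trans (le_bsup' hs hC')
  exact h1.trans (h2.trans h3)
end

section
/- For A, r > 0, the function k(z,s) := -A·exp(r)·exp((r - A·exp(r))(z-s)) satisfies, for all z, s ∈ [0,1]: (i) k(z,1) = -g(z) + ∫_z^1 k(z,s)·g(s) ds where g(z) = A·exp(rz), and (ii) ∂k/∂z(z,s) + ∂k/∂s(z,s) = 0. -/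
open Real

lemma exp_mul_integral (B a b : ℝ) (hB : B ≠ 0) :
    ∫ s in a..b, Real.exp (B * s) = (Real.exp (B * b) - Real.exp (B * a)) / B := by
  rw [intervalIntegral.integral_comp_mul_left (fun x => Real.exp x) hB, integral_exp,
    smul_eq_mul]
  field_simp

/-- The explicit backstepping kernel `k(z,s) = -A e^r exp((r - A e^r)(z-s))`
satisfies the kernel boundary condition
`k(z,1) = -g(z) + ∫_z^1 k(z,s) g(s) ds` with `g(z) = A exp(rz)`, and the
kernel PDE `∂k/∂z + ∂k/∂s = 0`, for all `z, s ∈ [0,1]`. -/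
theorem stmt_11 (A r : ℝ) (hA : 0 < A) (hr : 0 < r)
    (k : ℝ → ℝ → ℝ)
    (hkdef : ∀ z s : ℝ,
      k z s = -A * Real.exp r * Real.exp ((r - A * Real.exp r) * (z - s))) :
    (∀ z ∈ Set.Icc (0:ℝ) 1,
      k z 1 = -(A * Real.exp (r * z)) + ∫ s in z..1, k z s * (A * Real.exp (r * s))) ∧
    (∀ z ∈ Set.Icc (0:ℝ) 1, ∀ s ∈ Set.Icc (0:ℝ) 1,
      deriv (fun z' => k z' s) z + deriv (fun s' => k z s') s = 0) := by
  set B := A * Real.exp r with hBdef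
  have hBpos : 0 < B := mul_pos hA (Real.exp_pos r)
  set c := r - B with hcdef
  constructor
  · intro z _
    have hpt : ∀ s : ℝ, k z s * (A * Real.exp (r * s))
        = (-A * B * Real.exp (c * z)) * Real.exp (B * s) := by
      intro s
      rw [hkdef]
      rw [show (r - A * Real.exp r) * (z - s) = c * z + (B * s - r * s) from by
        simp only [hcdef, hBdef]; ring]
      rw [show c * z + (B * s - r * s) = (c * z + B * s) + (-(r * s)) from by ring,
        Real.exp_add, Real.exp_add]
      have h0 : Real.exp (-(r * s)) * Real.exp (r * s) = 1 := by
        rw [← Real.exp_add]; simp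
      rw [hBdef]
      linear_combination (-A * Real.exp r * (Real.exp (c*z) * Real.exp (B*s)) * A) * h0
    have hint : (∫ s in z..1, k z s * (A * Real.exp (r * s)))
        = (-A * B * Real.exp (c * z)) * ((Real.exp (B * 1) - Real.exp (B * z)) / B) := by
      simp_rw [hpt]
      rw [intervalIntegral.integral_const_mul, exp_mul_integral _ _ _ (ne_of_gt hBpos)]
    rw [hint, hkdef]
    have hBne : B ≠ 0 := ne_of_gt hBpos
    have h1 : Real.exp (c * z) * Real.exp (B * z) = Real.exp (r * z) := by
      rw [← Real.exp_add]; congr 1; simp only [hcdef]; ring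
    have h2 : (r - A * Real.exp r) * (z - 1) = c * z + B * 1 + (-r) := by
      simp only [hcdef, hBdef]; ring
    have h3 : Real.exp r * Real.exp (-r) = 1 := by rw [← Real.exp_add]; simp
    rw [h2, Real.exp_add, Real.exp_add]
    have h4 : B * B⁻¹ = 1 := mul_inv_cancel₀ hBne
    linear_combination (-A * Real.exp (c*z) * Real.exp (B*1)) * h3
      + (A * Real.exp (c*z) * (Real.exp (B*1) - Real.exp (B*z))) * h4 - A * h1
  · intro z _ s _
    have hfun1 : (fun z' => k z' s) = fun z' => -A * Real.exp r * Real.exp (c * (z' - s)) := by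
      funext z'; rw [hkdef]
    have hfun2 : (fun s' => k z s') = fun s' => -A * Real.exp r * Real.exp (c * (z - s')) := by
      funext s'; rw [hkdef]
    have hl1 : HasDerivAt (fun z' => c * (z' - s)) c z := by
      simpa using ((hasDerivAt_id z).sub_const s).const_mul c
    have hl2 : HasDerivAt (fun s' => c * (z - s')) (-c) s := by
      simpa using ((hasDerivAt_id s).const_sub z).const_mul c
    have hd1 : HasDerivAt (fun z' => -A * Real.exp r * Real.exp (c * (z' - s)))
        ((-A * Real.exp r) * (Real.exp (c * (z - s)) * c)) z := (hl1.exp).const_mul _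
    have hd2 : HasDerivAt (fun s' => -A * Real.exp r * Real.exp (c * (z - s')))
        ((-A * Real.exp r) * (Real.exp (c * (z - s)) * (-c))) s := (hl2.exp).const_mul _
    rw [hfun1, hfun2, hd1.deriv, hd2.deriv]
    ring
end

section
/- Let A, r > 0 with A ≥ r/(exp(r)-1). Then there exists a unique λ ≥ 0 satisfying A = (r+λ)·exp(λ)/(exp(r+λ) - 1). -/
open Real

/-- If `A ≥ r/(e^r - 1)` then the characteristic equation
`A = (r+λ) e^λ / (e^{r+λ} - 1)` has a unique solution `λ ≥ 0`. -/
theorem stmt_14 (A r : ℝ) (hA : 0 < A) (hr : 0 < r)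
    (hcond : r / (Real.exp r - 1) ≤ A) :
    ∃! lam : ℝ, 0 ≤ lam ∧
      A = (r + lam) * Real.exp lam / (Real.exp (r + lam) - 1) := by
  set f : ℝ → ℝ := fun x => (r + x) / (Real.exp r - Real.exp (-x)) with hf
  have her : 1 < Real.exp r := by linarith [Real.add_one_lt_exp hr.ne']
  have hden : ∀ x : ℝ, 0 ≤ x → 0 < Real.exp r - Real.exp (-x) := by
    intro x hx
    have h1 : Real.exp (-x) ≤ 1 := Real.exp_le_one_iff.mpr (by linarith)
    linarith
  -- equivalence of the two expressions
  have heq : ∀ x : ℝ, (r + x) * Real.exp x / (Real.exp (r + x) - 1) = f x := by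
    intro x
    have h1 : Real.exp (r + x) - 1 = (Real.exp r - Real.exp (-x)) * Real.exp x := by
      rw [sub_mul, ← Real.exp_add, ← Real.exp_add]
      simp
    rw [h1]
    show (r + x) * Real.exp x / ((Real.exp r - Real.exp (-x)) * Real.exp x)
        = (r + x) / (Real.exp r - Real.exp (-x))
    exact mul_div_mul_right _ _ (Real.exp_ne_zero x)
  have hf0 : f 0 = r / (Real.exp r - 1) := by simp [hf]
  -- continuity on Ici 0
  have hcont : ContinuousOn f (Set.Ici 0) := by
    apply ContinuousOn.div
    · exact (continuous_const.add continuous_id).continuousOn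
    · exact (continuous_const.sub (Real.continuous_exp.comp continuous_neg)).continuousOn
    · intro x hx; exact ne_of_gt (hden x hx)
  -- derivative
  have hderiv : ∀ x : ℝ, 0 ≤ x → HasDerivAt f
      ((1 * (Real.exp r - Real.exp (-x)) - (r + x) * -(Real.exp (-x) * -1)) /
        (Real.exp r - Real.exp (-x))^2) x := by
    intro x hx
    have h1 : HasDerivAt (fun x : ℝ => r + x) 1 x := (hasDerivAt_id x).const_add r
    have h2 : HasDerivAt (fun x : ℝ => Real.exp (-x)) (Real.exp (-x) * -1) x :=
      (Real.hasDerivAt_exp (-x)).comp x ((hasDerivAt_id x).neg)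
    exact h1.div (h2.const_sub (Real.exp r)) (ne_of_gt (hden x hx))
  have hpos : ∀ x : ℝ, 0 < x →
      0 < (1 * (Real.exp r - Real.exp (-x)) - (r + x) * -(Real.exp (-x) * -1)) /
        (Real.exp r - Real.exp (-x))^2 := by
    intro x hx
    have hd := hden x hx.le
    have h1 : r + x + 1 < Real.exp (r + x) := Real.add_one_lt_exp (by positivity)
    have h2 : Real.exp (-x) * Real.exp (r + x) = Real.exp r := by
      rw [← Real.exp_add]; ring_nf
    have h3 : 0 < Real.exp (-x) := Real.exp_pos _
    have hnum : 0 < 1 * (Real.exp r - Real.exp (-x)) - (r + x) * -(Real.exp (-x) * -1) := by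
      nlinarith
    positivity
  have hmono : StrictMonoOn f (Set.Ici 0) := by
    apply strictMonoOn_of_deriv_pos (convex_Ici 0) hcont
    intro x hx
    rw [interior_Ici] at hx
    rw [(hderiv x hx.le).deriv]
    exact hpos x hx
  -- existence via IVT
  set b : ℝ := A * Real.exp r with hb
  have hb0 : 0 < b := by positivity
  have hfb : A ≤ f b := by
    have hd := hden b hb0.le
    rw [hf]
    rw [le_div_iff₀ hd]
    have h1 : Real.exp (-b) > 0 := Real.exp_pos _
    nlinarith
  have hivt := intermediate_value_Icc hb0.le (hcont.mono Set.Icc_subset_Ici_self)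
  have hmem : A ∈ Set.Icc (f 0) (f b) := ⟨by rw [hf0]; exact hcond, hfb⟩
  obtain ⟨lam, hlam, hflam⟩ := hivt hmem
  refine ⟨lam, ⟨hlam.1, by rw [heq lam, hflam]⟩, ?_⟩
  intro y hy
  have hfy : f y = f lam := by
    rw [hflam, ← heq y, ← hy.2]
  exact hmono.injOn (Set.mem_Ici.mpr hy.1) (Set.mem_Ici.mpr hlam.1) hfy
end

section
/- Let A, r > 0 and λ ≥ 0 satisfy A = (r+λ)exp(λ)/(exp(r+λ)-1). Then x(t,z) := exp(λ(t+1-z))·(exp((r+λ)z) - 1)/(exp(r+λ) - 1) satisfies ∂x/∂t(t,z) + ∂x/∂z(t,z) = A·exp(rz)·x(t,1) for all (t,z) ∈ [0,∞)×[0,1], together with x(t,0) = 0 and x(t,1) = exp(λt). -/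
/-!
The solution separates as `x t z = e^{λ t} φ(z)` with the profile
`φ(z) = (e^{λ + r z} - e^{λ (1 - z)}) / (e^{r+λ} - 1)`, so the transport equation reduces to the
ODE `φ' + λ φ = A e^{r z} φ(1)`. The second exponential in `φ` is killed by `φ' + λ φ`, the first
one produces `(r + λ) e^{λ} e^{r z} / (e^{r+λ} - 1) = A e^{r z}`, and `φ(0) = 0`, `φ(1) = 1`.
-/

open Real

noncomputable def transportProfile (r lam z : ℝ) : ℝ :=
  (exp (lam + r * z) - exp (lam * (1 - z))) / (exp (r + lam) - 1)

lemma exp_mul_transportProfile (r lam t z : ℝ) :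
    exp (lam * (t + 1 - z)) * (exp ((r + lam) * z) - 1) / (exp (r + lam) - 1)
      = exp (lam * t) * transportProfile r lam z := by
  have hnum : exp (lam * (t + 1 - z)) * (exp ((r + lam) * z) - 1)
      = exp (lam * t) * (exp (lam + r * z) - exp (lam * (1 - z))) := by
    simp only [mul_sub, mul_one, ← exp_add]
    ring_nf
  rw [hnum, transportProfile, mul_div_assoc]

lemma hasDerivAt_transportProfile (r lam z : ℝ) :
    HasDerivAt (transportProfile r lam)
      ((r * exp (lam + r * z) + lam * exp (lam * (1 - z))) / (exp (r + lam) - 1)) z := by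
  have hgrowth : HasDerivAt (fun z => exp (lam + r * z)) (r * exp (lam + r * z)) z := by
    simpa [mul_comm] using (((hasDerivAt_id z).const_mul r).const_add lam).exp
  have hdecay : HasDerivAt (fun z => exp (lam * (1 - z))) (-lam * exp (lam * (1 - z))) z := by
    simpa [mul_comm] using (((hasDerivAt_id z).const_sub 1).const_mul lam).exp
  exact ((hgrowth.sub hdecay).div_const _).congr_deriv (by ring)

lemma deriv_transportProfile_add (r lam z : ℝ) :
    deriv (transportProfile r lam) z + lam * transportProfile r lam z
      = (r + lam) * exp lam / (exp (r + lam) - 1) * exp (r * z) := by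
  rw [(hasDerivAt_transportProfile r lam z).deriv, transportProfile, exp_add]
  ring

lemma transportProfile_zero (r lam : ℝ) : transportProfile r lam 0 = 0 := by
  simp [transportProfile]

lemma transportProfile_one {r lam : ℝ} (h : r + lam ≠ 0) : transportProfile r lam 1 = 1 := by
  have hD : exp (r + lam) - 1 ≠ 0 := sub_ne_zero.mpr (exp_eq_one_iff _ |>.not.mpr h)
  rw [transportProfile, sub_self, mul_zero, exp_zero, mul_one, add_comm, div_self hD]

lemma deriv_exp_mul_add_deriv_exp_mul {φ : ℝ → ℝ} {lam t z : ℝ} (hφ : DifferentiableAt ℝ φ z) :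
    deriv (fun t => exp (lam * t) * φ z) t + deriv (fun z => exp (lam * t) * φ z) z
      = exp (lam * t) * (deriv φ z + lam * φ z) := by
  have htime : HasDerivAt (fun t => exp (lam * t) * φ z) (exp (lam * t) * lam * φ z) t := by
    simpa [mul_comm] using (((hasDerivAt_id t).const_mul lam).exp).mul_const (φ z)
  rw [htime.deriv, deriv_const_mul _ hφ]
  ring

theorem stmt_15_general (A r lam : ℝ) (hr : 0 < r) (hlam : 0 ≤ lam)
    (hchar : A = (r + lam) * Real.exp lam / (Real.exp (r + lam) - 1))
    (x : ℝ → ℝ → ℝ)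
    (hxdef : ∀ t z : ℝ,
      x t z = Real.exp (lam * (t + 1 - z))
              * (Real.exp ((r + lam) * z) - 1) / (Real.exp (r + lam) - 1)) :
    (∀ t ≥ (0:ℝ), ∀ z ∈ Set.Icc (0:ℝ) 1,
      deriv (fun t' => x t' z) t + deriv (fun z' => x t z') z
        = A * Real.exp (r * z) * x t 1) ∧
    (∀ t ≥ (0:ℝ), x t 0 = 0) ∧
    (∀ t ≥ (0:ℝ), x t 1 = Real.exp (lam * t)) := by
  have hx : x = fun t z => exp (lam * t) * transportProfile r lam z := by
    ext t z
    rw [hxdef, exp_mul_transportProfile]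
  have hone : transportProfile r lam 1 = 1 := transportProfile_one (by linarith)
  subst hx hchar
  refine ⟨fun t _ z _ => ?_, fun t _ => ?_, fun t _ => ?_⟩
  · rw [deriv_exp_mul_add_deriv_exp_mul (hasDerivAt_transportProfile r lam z).differentiableAt,
      deriv_transportProfile_add]
    simp only [hone, mul_one]
    ring
  · simp [transportProfile_zero]
  · simp [hone]

/-- The explicit function
`x(t,z) = e^{λ(t+1-z)} (e^{(r+λ)z} - 1)/(e^{r+λ} - 1)` is a non-decaying
classical solution of the open-loop system
`x_t + x_z = A e^{rz} x(t,1)`, `x(t,0) = 0`, with `x(t,1) = e^{λ t}`. -/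
theorem stmt_15 (A r lam : ℝ) (hA : 0 < A) (hr : 0 < r) (hlam : 0 ≤ lam)
    (hchar : A = (r + lam) * Real.exp lam / (Real.exp (r + lam) - 1))
    (x : ℝ → ℝ → ℝ)
    (hxdef : ∀ t z : ℝ,
      x t z = Real.exp (lam * (t + 1 - z))
              * (Real.exp ((r + lam) * z) - 1) / (Real.exp (r + lam) - 1)) :
    (∀ t ≥ (0:ℝ), ∀ z ∈ Set.Icc (0:ℝ) 1,
      deriv (fun t' => x t' z) t + deriv (fun z' => x t z') z
        = A * Real.exp (r * z) * x t 1) ∧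
    (∀ t ≥ (0:ℝ), x t 0 = 0) ∧
    (∀ t ≥ (0:ℝ), x t 1 = Real.exp (lam * t)) :=
  stmt_15_general A r lam hr hlam hchar x hxdef
end
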